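/- arXiv:0709.1013 — 3 statements merged into one kernel-verified Lean document; each statement's English description precedes it below -/
import Mathlib

section
/- Let (Ω, ℱ, ℙ) be a probability space and let X and Y be real-valued random variables on Ω. Assume: (i) the law of X is absolutely continuous with respect to Lebesgue measure with density f, and f is continuous on a neighbourhood of a point x ∈ ℝ; (ii) sup_ω |Y(ω)| < ∞; (iii) there is a Markov kernel K from ℝ to ℝ that is a version of the conditional distribution of Y given X, such that s ↦ K(s, ·) is weakly continuous at x. Then for all families (x_t), (a_t), (c_t) of real numbers with x_t → x, a_t → a, c_t → c and c_t ≥ 0 as t ↓ 0, one has (1/t) · ℙ( x_t < X + t·a_t·Y ≤ x_t + t·c_t ) → c · f(x) as t ↓ 0. -/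
/-!
After the substitution `X = x_t + t v`, `t⁻¹ ℙ(x_t < X + t a_t Y ≤ x_t + t c_t)` becomes
`∫ K(x_t + t v, {y | 0 < v + a_t y ≤ c_t}) f(x_t + t v) dv`. Since `Y` is bounded and `a_t → a`,
`c_t → c`, the indicator of `0 < v + a_t y ≤ c_t` is squeezed between continuous trapezoids
`φ(v + a y)` whose integrals are within `5ε` of `c`. For a fixed continuous compactly supported
`φ`, dominated convergence, using the weak continuity of `K` and the continuity of `f` at `x`,
sends the corresponding integral to `f x ∫∫ φ(v + a y) dv K(x, dy) = f x ∫ φ`.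
-/

open MeasureTheory ProbabilityTheory Filter Topology Set

theorem tendsto_of_eventually_between {ι γ β : Type*} [TopologicalSpace β] [LinearOrder β]
    [OrderTopology β] {l : Filter ι} {l' : Filter γ} [l'.NeBot] {J : ι → β} {lo hi : γ → β}
    {L : β} (hlo : Tendsto lo l' (𝓝 L)) (hhi : Tendsto hi l' (𝓝 L))
    (h : ∀ᶠ ε in l', ∀ᶠ t in l, J t ∈ Icc (lo ε) (hi ε)) : Tendsto J l (𝓝 L) := by
  refine tendsto_order.2 ⟨fun b hb => ?_, fun b hb => ?_⟩
  · obtain ⟨ε, hε, hbε⟩ := (h.and (hlo.eventually (lt_mem_nhds hb))).exists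
    exact hε.mono fun t ht => hbε.trans_le ht.1
  · obtain ⟨ε, hε, hbε⟩ := (h.and (hhi.eventually (gt_mem_nhds hb))).exists
    exact hε.mono fun t ht => ht.2.trans_lt hbε

theorem nonneg_of_ae_nonneg_of_continuousAt {α : Type*} [TopologicalSpace α] [MeasurableSpace α]
    {μ : Measure α} [μ.IsOpenPosMeasure] {f : α → ℝ} {x : α} (hf : 0 ≤ᵐ[μ] f)
    (hfx : ContinuousAt f x) : 0 ≤ f x := by
  by_contra! hneg
  have hnhds : {s | f s < 0} ∈ 𝓝 x := hfx.eventually (gt_mem_nhds hneg)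
  exact (μ.measure_pos_of_mem_nhds hnhds).ne'
    (measure_mono_null (fun s hs => not_le.2 hs) (ae_iff.1 hf))

theorem integral_withDensity_ofReal {α : Type*} [MeasurableSpace α] {μ : Measure α} {f : α → ℝ}
    (hf : AEMeasurable f μ) (hf0 : 0 ≤ᵐ[μ] f) (g : α → ℝ) :
    ∫ s, g s ∂μ.withDensity (fun s => ENNReal.ofReal (f s)) = ∫ s, g s * f s ∂μ := by
  rw [integral_withDensity_eq_integral_toReal_smul₀ hf.ennreal_ofReal
    (ae_of_all _ fun _ => ENNReal.ofReal_lt_top)]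
  refine integral_congr_ae (hf0.mono fun s hs => ?_)
  simp only [ENNReal.toReal_ofReal (show 0 ≤ f s from hs), smul_eq_mul, mul_comm]

theorem integral_integral_comp_add {β : Type*} [MeasurableSpace β] {ρ : Measure β}
    [IsProbabilityMeasure ρ] {φ : ℝ → ℝ} (hφm : Measurable φ) (hφ : Integrable φ) {w : β → ℝ}
    (hw : Measurable w) : ∫ v, ∫ y, φ (v + w y) ∂ρ = ∫ u, φ u := by
  have hint : Integrable (Function.uncurry fun v y => φ (v + w y)) (volume.prod ρ) := by
    refine (integrable_prod_iff' (hφm.comp (by fun_prop)).aestronglyMeasurable).2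
      ⟨ae_of_all _ fun y => hφ.comp_add_right (w y), ?_⟩
    simp only [Function.comp_apply, integral_add_right_eq_self fun u => ‖φ u‖]
    exact integrable_const _
  rw [integral_integral_swap hint]
  simp only [integral_add_right_eq_self φ, integral_const, probReal_univ, one_smul]

noncomputable def trapezoid (p q δ u : ℝ) : ℝ :=
  max 0 (min 1 (min (u - p + δ) (q + δ - u) / δ))

section trapezoid

variable {p q δ : ℝ}

theorem trapezoid_nonneg (u : ℝ) : 0 ≤ trapezoid p q δ u := le_max_left _ _

theorem trapezoid_le_one (u : ℝ) : trapezoid p q δ u ≤ 1 :=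
  max_le zero_le_one (min_le_left _ _)

@[fun_prop]
theorem continuous_trapezoid : Continuous (trapezoid p q δ) := by
  unfold trapezoid; fun_prop

theorem trapezoid_eq_one (hδ : 0 < δ) {u : ℝ} (hu : u ∈ Icc p q) : trapezoid p q δ u = 1 := by
  have : 1 ≤ min (u - p + δ) (q + δ - u) / δ := by
    rw [le_div_iff₀ hδ]; exact le_min (by linarith [hu.1]) (by linarith [hu.2])
  rw [trapezoid, min_eq_left this, max_eq_right zero_le_one]

theorem trapezoid_eq_zero (hδ : 0 < δ) {u : ℝ} (hu : u ∉ Ioo (p - δ) (q + δ)) :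
    trapezoid p q δ u = 0 := by
  have : min (u - p + δ) (q + δ - u) ≤ 0 := by
    rw [mem_Ioo, not_and_or, not_lt, not_lt] at hu
    rcases hu with hu | hu
    · exact min_le_of_left_le (by linarith)
    · exact min_le_of_right_le (by linarith)
  exact max_eq_left ((min_le_right _ _).trans (div_nonpos_of_nonpos_of_nonneg this hδ.le))

theorem hasCompactSupport_trapezoid (hδ : 0 < δ) : HasCompactSupport (trapezoid p q δ) :=
  HasCompactSupport.intro (isCompact_Icc (a := p - δ) (b := q + δ)) fun _ hu =>
    trapezoid_eq_zero hδ fun h => hu (Ioo_subset_Icc_self h)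

theorem le_integral_trapezoid (hδ : 0 < δ) : q - p ≤ ∫ u, trapezoid p q δ u := by
  have hle : (Icc p q).indicator 1 ≤ trapezoid p q δ := fun u => by
    by_cases hu : u ∈ Icc p q
    · simp [indicator_of_mem hu, trapezoid_eq_one hδ hu]
    · simp [indicator_of_notMem hu, trapezoid_nonneg]
  calc q - p ≤ max (q - p) 0 := le_max_left _ _
    _ = ∫ u, (Icc p q).indicator 1 u := by
      rw [integral_indicator_one measurableSet_Icc, Real.volume_real_Icc]
    _ ≤ ∫ u, trapezoid p q δ u :=
      integral_mono ((continuous_const.integrableOn_Icc).integrable_indicator measurableSet_Icc)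
        (continuous_trapezoid.integrable_of_hasCompactSupport (hasCompactSupport_trapezoid hδ)) hle

theorem integral_trapezoid_le (hδ : 0 < δ) (hpq : p ≤ q) :
    ∫ u, trapezoid p q δ u ≤ q - p + 2 * δ := by
  have hle : trapezoid p q δ ≤ (Icc (p - δ) (q + δ)).indicator 1 := fun u => by
    by_cases hu : u ∈ Icc (p - δ) (q + δ)
    · simp [indicator_of_mem hu, trapezoid_le_one]
    · rw [indicator_of_notMem hu, trapezoid_eq_zero hδ fun h => hu (Ioo_subset_Icc_self h)]
  calc ∫ u, trapezoid p q δ u ≤ ∫ u, (Icc (p - δ) (q + δ)).indicator 1 u :=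
      integral_mono
        (continuous_trapezoid.integrable_of_hasCompactSupport (hasCompactSupport_trapezoid hδ))
        ((continuous_const.integrableOn_Icc).integrable_indicator measurableSet_Icc) hle
    _ = q - p + 2 * δ := by
      rw [integral_indicator_one measurableSet_Icc, Real.volume_real_Icc,
        max_eq_left (by linarith)]
      ring

end trapezoid

def IsCondDistribWithDensity {Ω : Type*} [MeasurableSpace Ω] (P : Measure Ω) (X Y : Ω → ℝ)
    (K : Kernel ℝ ℝ) (f : ℝ → ℝ) : Prop :=
  ∀ A B : Set ℝ, MeasurableSet A → MeasurableSet B →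
    (P {ω | X ω ∈ A ∧ Y ω ∈ B}).toReal = ∫ s in A, (K s B).toReal * f s

def WeaklyContinuousAt (K : Kernel ℝ ℝ) (x : ℝ) : Prop :=
  ∀ g : ℝ → ℝ, Continuous g → (∃ C, ∀ y, |g y| ≤ C) →
    Tendsto (fun s => ∫ y, g y ∂(K s)) (𝓝 x) (𝓝 (∫ y, g y ∂(K x)))

namespace IsCondDistribWithDensity

variable {Ω : Type*} [MeasurableSpace Ω] {P : Measure Ω} [IsProbabilityMeasure P] {X Y : Ω → ℝ}
  {K : Kernel ℝ ℝ} [IsMarkovKernel K] {f : ℝ → ℝ}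

theorem integrable (h : IsCondDistribWithDensity P X Y K f) : Integrable f := by
  have h₁ := h univ univ MeasurableSet.univ MeasurableSet.univ
  simp only [mem_univ, and_self, ofPred_true, measure_univ, ENNReal.toReal_one,
    Measure.restrict_univ, one_mul] at h₁
  by_contra hf
  rw [integral_undef hf] at h₁
  exact one_ne_zero h₁

theorem ae_nonneg (h : IsCondDistribWithDensity P X Y K f) : 0 ≤ᵐ[volume] f :=
  ae_nonneg_of_forall_setIntegral_nonneg h.integrable fun A hA _ => by
    have h₁ := h A univ hA MeasurableSet.univ
    simp only [mem_univ, and_true, measure_univ, ENNReal.toReal_one, one_mul] at h₁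
    exact h₁ ▸ ENNReal.toReal_nonneg

theorem map_prodMk (h : IsCondDistribWithDensity P X Y K f) (hX : Measurable X)
    (hY : Measurable Y) :
    P.map (fun ω => (X ω, Y ω))
      = volume.withDensity (fun s => ENNReal.ofReal (f s)) ⊗ₘ K := by
  have := isFiniteMeasure_withDensity_ofReal h.integrable.2
  refine Measure.ext_prod fun {A B} hA hB => ?_
  refine (ENNReal.toReal_eq_toReal_iff' (measure_ne_top _ _) (measure_ne_top _ _)).1 ?_
  rw [Measure.map_apply (hX.prodMk hY) (hA.prod hB), Measure.compProd_apply_prod hA hB,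
    ← integral_toReal (K.measurable_coe hB).aemeasurable (ae_of_all _ fun _ => measure_lt_top _ _),
    restrict_withDensity hA, integral_withDensity_ofReal h.integrable.aemeasurable.restrict
      (ae_restrict_of_ae h.ae_nonneg)]
  exact h A B hA hB

end IsCondDistribWithDensity

theorem integral_compProd_withDensity_rescale {f : ℝ → ℝ} (hf : Integrable f)
    (hf0 : 0 ≤ᵐ[volume] f) (K : Kernel ℝ ℝ) [IsFiniteKernel K] {ψ : ℝ × ℝ → ℝ}
    (hψ : Measurable ψ) {C : ℝ} (hψC : ∀ z, |ψ z| ≤ C) (b : ℝ) {t : ℝ} (ht : 0 < t) :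
    ∫ z, ψ ((z.1 - b) / t, z.2) ∂(volume.withDensity (fun s => ENNReal.ofReal (f s)) ⊗ₘ K)
      = t * ∫ v, (∫ y, ψ (v, y) ∂K (b + t * v)) * f (b + t * v) := by
  have := isFiniteMeasure_withDensity_ofReal hf.2
  have hint : Integrable (fun z : ℝ × ℝ => ψ ((z.1 - b) / t, z.2))
      (volume.withDensity (fun s => ENNReal.ofReal (f s)) ⊗ₘ K) :=
    Integrable.of_bound (hψ.comp (by fun_prop)).aestronglyMeasurable C
      (ae_of_all _ fun _ => (Real.norm_eq_abs _).trans_le (hψC _))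
  set h : ℝ → ℝ := fun s => (∫ y, ψ ((s - b) / t, y) ∂K s) * f s
  have hsubst : ∫ v, h (b + t * v) = t⁻¹ * ∫ s, h s := by
    rw [Measure.integral_comp_mul_left (fun u => h (b + u)), integral_add_left_eq_self,
      abs_of_pos (inv_pos.2 ht), smul_eq_mul]
  rw [Measure.integral_compProd hint, integral_withDensity_ofReal hf.aemeasurable hf0]
  simp only [h, add_sub_cancel_left, mul_div_cancel_left₀ _ ht.ne'] at hsubst
  rw [hsubst, mul_inv_cancel_left₀ ht.ne']

theorem eventually_norm_integral_kernel_rescaled_le {f : ℝ → ℝ} {x : ℝ} (hfx : ContinuousAt f x)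
    {K : Kernel ℝ ℝ} [IsMarkovKernel K] {ψ : ℝ × ℝ → ℝ} {C M : ℝ} (hψC : ∀ z, |ψ z| ≤ C)
    (hψM : ∀ v y, M < |v| → ψ (v, y) = 0) {xt : ℝ → ℝ} (hxt : Tendsto xt (𝓝[>] 0) (𝓝 x)) :
    ∀ᶠ t in 𝓝[>] 0, ∀ v, ‖(∫ y, ψ (v, y) ∂K (xt t + t * v)) * f (xt t + t * v)‖
      ≤ (Icc (-M) M).indicator (fun _ => C * (|f x| + 1)) v := by
  have hinner : ∀ s v, |∫ y, ψ (v, y) ∂K s| ≤ C := fun s v => by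
    simpa using norm_integral_le_of_norm_le_const (μ := K s)
      (ae_of_all _ fun y => (Real.norm_eq_abs _).trans_le (hψC (v, y)))
  have hC0 : 0 ≤ C := (abs_nonneg _).trans (hψC 0)
  obtain ⟨r, hr, hfr⟩ := Metric.eventually_nhds_iff.1
    (hfx.abs.eventually_lt continuousAt_const (lt_add_one |f x|))
  have hnear : ∀ᶠ t in 𝓝[>] (0 : ℝ), |xt t - x| + t * M < r := by
    have : Tendsto (fun t => |xt t - x| + t * M) (𝓝[>] 0) (𝓝 0) := by
      simpa using ((tendsto_sub_nhds_zero_iff.2 hxt).abs).add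
        ((tendsto_id.mono_left nhdsWithin_le_nhds).mul_const M)
    exact this.eventually (gt_mem_nhds hr)
  filter_upwards [hnear, self_mem_nhdsWithin] with t hnear (ht : 0 < t) v
  by_cases hv : |v| ≤ M
  · have hdist : dist (xt t + t * v) x < r := by
      rw [Real.dist_eq]
      calc |xt t + t * v - x| = |(xt t - x) + t * v| := by ring_nf
        _ ≤ |xt t - x| + |t * v| := abs_add_le _ _
        _ = |xt t - x| + t * |v| := by rw [abs_mul, abs_of_pos ht]
        _ ≤ |xt t - x| + t * M := by gcongr
        _ < r := hnear
    rw [indicator_of_mem (mem_Icc.2 (abs_le.1 hv)), Real.norm_eq_abs, abs_mul]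
    exact mul_le_mul (hinner _ _) (hfr hdist).le (abs_nonneg _) hC0
  · have hzero : ∀ y, ψ (v, y) = 0 := fun y => hψM v y (not_le.1 hv)
    simpa [hzero] using indicator_nonneg (fun _ _ => by positivity) v

theorem tendsto_integral_kernel_rescaled {f : ℝ → ℝ} {x : ℝ} (hf : Integrable f)
    (hfx : ContinuousAt f x) {K : Kernel ℝ ℝ} [IsMarkovKernel K] (hK : WeaklyContinuousAt K x)
    {ψ : ℝ × ℝ → ℝ} (hψ : Continuous ψ) {C M : ℝ} (hψC : ∀ z, |ψ z| ≤ C)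
    (hψM : ∀ v y, M < |v| → ψ (v, y) = 0) {xt : ℝ → ℝ} (hxt : Tendsto xt (𝓝[>] 0) (𝓝 x)) :
    Tendsto (fun t => ∫ v, (∫ y, ψ (v, y) ∂K (xt t + t * v)) * f (xt t + t * v)) (𝓝[>] 0)
      (𝓝 ((∫ v, ∫ y, ψ (v, y) ∂K x) * f x)) := by
  have hpath : ∀ v, Tendsto (fun t => xt t + t * v) (𝓝[>] 0) (𝓝 x) := fun v => by
    simpa using hxt.add ((tendsto_id.mono_left nhdsWithin_le_nhds).mul_const v)
  rw [← integral_mul_const]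
  refine tendsto_integral_filter_of_dominated_convergence _ ?_
    ((eventually_norm_integral_kernel_rescaled_le hfx hψC hψM hxt).mono fun _ h => ae_of_all _ h)
    ((continuous_const.integrableOn_Icc).integrable_indicator measurableSet_Icc)
    (ae_of_all _ fun v => ((hK _ (by fun_prop) ⟨C, fun y => hψC (v, y)⟩).comp (hpath v)).mul
      (hfx.tendsto.comp (hpath v)))
  filter_upwards [self_mem_nhdsWithin] with t ht
  have he : Measurable fun v : ℝ => xt t + t * v := by fun_prop
  exact (hψ.stronglyMeasurable.integral_kernel_prod_right' (κ := K.comap _ he)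
    ).aestronglyMeasurable.mul
      ((hf.comp_add_left (xt t)).comp_mul_left' (ne_of_gt ht)).aestronglyMeasurable

theorem mem_Ioc_rescale_iff {s y b t a c : ℝ} (ht : 0 < t) :
    (s - b) / t + a * y ∈ Ioc 0 c ↔ b < s + t * a * y ∧ s + t * a * y ≤ b + t * c := by
  rw [show (s - b) / t + a * y = (s + t * a * y - b) / t by field_simp; ring, mem_Ioc,
    div_pos_iff_of_pos_right ht, div_le_iff₀ ht]
  constructor <;> rintro ⟨h₁, h₂⟩ <;> constructor <;> linarith

theorem integral_trapezoid_le_measureReal_le {Ω : Type*} [MeasurableSpace Ω] {P : Measure Ω}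
    [IsFiniteMeasure P] {X Y : Ω → ℝ} (hX : Measurable X) (hY : Measurable Y) {C : ℝ}
    (hC : ∀ ω, |Y ω| ≤ C) {a a' b c c' t ε : ℝ} (ht : 0 < t) (hε : 0 < ε)
    (ha : |a' - a| * C ≤ ε) (hc : |c' - c| ≤ ε) :
    ∫ ω, trapezoid (2 * ε) (c - 3 * ε) ε ((X ω - b) / t + a * Y ω) ∂P
        ≤ P.real {ω | b < X ω + t * a' * Y ω ∧ X ω + t * a' * Y ω ≤ b + t * c'} ∧
      P.real {ω | b < X ω + t * a' * Y ω ∧ X ω + t * a' * Y ω ≤ b + t * c'}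
        ≤ ∫ ω, trapezoid (-ε) (c + 2 * ε) ε ((X ω - b) / t + a * Y ω) ∂P := by
  set u : Ω → ℝ := fun ω => (X ω - b) / t + a * Y ω
  set E := {ω | b < X ω + t * a' * Y ω ∧ X ω + t * a' * Y ω ≤ b + t * c'}
  have hE : E = (fun ω => u ω + (a' - a) * Y ω) ⁻¹' Ioc 0 c' := by
    ext ω
    rw [mem_preimage, show u ω + (a' - a) * Y ω = (X ω - b) / t + a' * Y ω by ring,
      mem_Ioc_rescale_iff ht]
    rfl
  have hEm : MeasurableSet E := hE ▸ (by fun_prop : Measurable _) measurableSet_Ioc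
  have hclose : ∀ ω, |(a' - a) * Y ω| ≤ ε := fun ω => by
    rw [abs_mul]
    exact (mul_le_mul_of_nonneg_left (hC ω) (abs_nonneg _)).trans ha
  have hc' := abs_le.1 hc
  have htrap : ∀ p q, Integrable (fun ω => trapezoid p q ε (u ω)) P := fun p q =>
    Integrable.of_bound (by fun_prop) 1 (ae_of_all _ fun ω => by
      rw [Real.norm_of_nonneg (trapezoid_nonneg _)]; exact trapezoid_le_one _)
  rw [← integral_indicator_one hEm]
  have hind : Integrable (E.indicator 1) P := (integrable_const (1 : ℝ)).indicator hEm
  constructor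
  · refine integral_mono (htrap _ _) hind fun ω => ?_
    by_cases hω : trapezoid (2 * ε) (c - 3 * ε) ε (u ω) = 0
    · rw [hω]; exact indicator_nonneg (fun _ _ => zero_le_one) ω
    have hu := not_not.1 (mt (trapezoid_eq_zero hε) hω)
    have hω' : ω ∈ E := by
      rw [hE, mem_preimage]
      have := abs_le.1 (hclose ω)
      constructor <;> linarith [hu.1, hu.2]
    rw [indicator_of_mem hω']
    exact trapezoid_le_one _
  · refine integral_mono hind (htrap _ _) fun ω => ?_
    by_cases hω : ω ∈ E
    · rw [indicator_of_mem hω]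
      have hu : u ω + (a' - a) * Y ω ∈ Ioc 0 c' := by rwa [hE] at hω
      have := abs_le.1 (hclose ω)
      rw [trapezoid_eq_one hε ⟨by linarith [hu.1], by linarith [hu.2]⟩]
      rfl
    · rw [indicator_of_notMem hω]
      exact trapezoid_nonneg _

theorem IsCondDistribWithDensity.tendsto_integral_rescaled {Ω : Type*} [MeasurableSpace Ω]
    {P : Measure Ω} [IsProbabilityMeasure P] {X Y : Ω → ℝ} {K : Kernel ℝ ℝ} [IsMarkovKernel K]
    {f : ℝ → ℝ} {x : ℝ} (h : IsCondDistribWithDensity P X Y K f) (hX : Measurable X)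
    (hY : Measurable Y) {C : ℝ} (hC : ∀ ω, |Y ω| ≤ C) (hfx : ContinuousAt f x)
    (hK : WeaklyContinuousAt K x) {φ : ℝ → ℝ} (hφ : Continuous φ) (hφs : HasCompactSupport φ)
    (a : ℝ) {xt : ℝ → ℝ} (hxt : Tendsto xt (𝓝[>] 0) (𝓝 x)) :
    Tendsto (fun t => t⁻¹ * ∫ ω, φ ((X ω - xt t) / t + a * Y ω) ∂P) (𝓝[>] 0)
      (𝓝 ((∫ u, φ u) * f x)) := by
  -- clamping `Y` to `[-C, C]` changes nothing, but makes the test function vanish for large `v`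
  set w : ℝ → ℝ := fun y => a * max (-C) (min y C)
  set ψ : ℝ × ℝ → ℝ := fun z => φ (z.1 + w z.2)
  have hψ : Continuous ψ := by fun_prop
  obtain ⟨Cφ, hCφ⟩ := hφ.bounded_above_of_compact_support hφs
  have hψC : ∀ z, |ψ z| ≤ Cφ := fun z => (Real.norm_eq_abs _).symm.trans_le (hCφ _)
  obtain ⟨R, hR⟩ := hφs.isCompact.isBounded.subset_closedBall 0
  have hψM : ∀ v y, R + |a| * |C| < |v| → ψ (v, y) = 0 := fun v y hv => by
    refine (image_eq_zero_of_notMem_tsupport fun hmem => ?_ : φ (v + w y) = 0)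
    have hvw : |v + w y| ≤ R := by simpa [Real.dist_eq] using hR hmem
    have hw : |w y| ≤ |a| * |C| := by
      rw [abs_mul]
      refine mul_le_mul_of_nonneg_left (abs_le.2 ?_) (abs_nonneg a)
      exact ⟨(neg_le_neg (le_abs_self C)).trans (le_max_left _ _),
        max_le (neg_le_abs C) ((min_le_right _ _).trans (le_abs_self C))⟩
    have := abs_sub_abs_le_abs_sub v (-w y)
    rw [sub_neg_eq_add, abs_neg] at this
    linarith
  have hclamp : ∀ t ω, φ ((X ω - xt t) / t + a * Y ω) = ψ ((X ω - xt t) / t, Y ω) := fun t ω => by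
    simp only [ψ, w, min_eq_left (abs_le.1 (hC ω)).2, max_eq_right (abs_le.1 (hC ω)).1]
  have hf := h.integrable
  have hrescale : ∀ t > 0, t⁻¹ * ∫ ω, φ ((X ω - xt t) / t + a * Y ω) ∂P
      = ∫ v, (∫ y, ψ (v, y) ∂K (xt t + t * v)) * f (xt t + t * v) := fun t ht => by
    rw [integral_congr_ae (ae_of_all _ (hclamp t)),
      ← integral_map (f := fun z => ψ ((z.1 - xt t) / t, z.2)) (hX.prodMk hY).aemeasurable
        (hψ.comp (by fun_prop)).aestronglyMeasurable,
      h.map_prodMk hX hY, integral_compProd_withDensity_rescale hf h.ae_nonneg K hψ.measurable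
        hψC (xt t) ht, inv_mul_cancel_left₀ ht.ne']
  have hlim := tendsto_integral_kernel_rescaled hf hfx hK hψ hψC hψM hxt
  rw [show ∫ v, ∫ y, ψ (v, y) ∂K x = ∫ u, φ u from integral_integral_comp_add hφ.measurable
    (hφ.integrable_of_hasCompactSupport hφs) (by fun_prop)] at hlim
  exact hlim.congr' (eventually_nhdsWithin_of_forall fun t ht => (hrescale t ht).symm)

theorem IsCondDistribWithDensity.eventually_inv_mul_measureReal_mem_Icc {Ω : Type*}
    [MeasurableSpace Ω] {P : Measure Ω} [IsProbabilityMeasure P] {X Y : Ω → ℝ}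
    {K : Kernel ℝ ℝ} [IsMarkovKernel K] {f : ℝ → ℝ} {x : ℝ}
    (h : IsCondDistribWithDensity P X Y K f) (hX : Measurable X) (hY : Measurable Y) {C : ℝ}
    (hC : ∀ ω, |Y ω| ≤ C) (hfx : ContinuousAt f x) (hK : WeaklyContinuousAt K x)
    {xt af cf : ℝ → ℝ} {a c : ℝ} (hxt : Tendsto xt (𝓝[>] 0) (𝓝 x))
    (haf : Tendsto af (𝓝[>] 0) (𝓝 a)) (hcf : Tendsto cf (𝓝[>] 0) (𝓝 c)) (hc0 : 0 ≤ c)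
    {ε : ℝ} (hε : 0 < ε) :
    ∀ᶠ t in 𝓝[>] 0, t⁻¹ * P.real {ω | xt t < X ω + t * af t * Y ω ∧
        X ω + t * af t * Y ω ≤ xt t + t * cf t}
      ∈ Icc ((c - 5 * ε) * f x - ε) ((c + 5 * ε) * f x + ε) := by
  have hfx0 : 0 ≤ f x := nonneg_of_ae_nonneg_of_continuousAt h.ae_nonneg hfx
  have hlim (p q : ℝ) : Tendsto
      (fun t => t⁻¹ * ∫ ω, trapezoid p q ε ((X ω - xt t) / t + a * Y ω) ∂P) (𝓝[>] 0)
      (𝓝 ((∫ u, trapezoid p q ε u) * f x)) :=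
    h.tendsto_integral_rescaled hX hY hC hfx hK continuous_trapezoid
      (hasCompactSupport_trapezoid hε) a hxt
  have hlo := (hlim (2 * ε) (c - 3 * ε)).eventually (lt_mem_nhds (show
      (c - 5 * ε) * f x - ε < (∫ u, trapezoid (2 * ε) (c - 3 * ε) ε u) * f x by
    nlinarith [le_integral_trapezoid (p := 2 * ε) (q := c - 3 * ε) hε]))
  have hhi := (hlim (-ε) (c + 2 * ε)).eventually (gt_mem_nhds (show
      (∫ u, trapezoid (-ε) (c + 2 * ε) ε u) * f x < (c + 5 * ε) * f x + ε by
    nlinarith [integral_trapezoid_le (p := -ε) (q := c + 2 * ε) hε (by linarith)]))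
  have ha : ∀ᶠ t in 𝓝[>] 0, |af t - a| * C ≤ ε :=
    ((tendsto_sub_nhds_zero_iff.2 haf).abs.mul_const C).eventually (ge_mem_nhds (by simpa))
  have hc : ∀ᶠ t in 𝓝[>] 0, |cf t - c| ≤ ε :=
    (Metric.tendsto_nhds.1 hcf ε hε).mono fun t ht => (Real.dist_eq _ _ ▸ ht).le
  filter_upwards [hlo, hhi, ha, hc, self_mem_nhdsWithin] with t hlo hhi ha hc (ht : 0 < t)
  obtain ⟨h₁, h₂⟩ := integral_trapezoid_le_measureReal_le (P := P) (b := xt t) hX hY hC ht hε ha hc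
  exact ⟨hlo.le.trans (mul_le_mul_of_nonneg_left h₁ (inv_nonneg.2 ht.le)),
    (mul_le_mul_of_nonneg_left h₂ (inv_nonneg.2 ht.le)).trans hhi.le⟩

theorem stmt_2_general
    {Ω : Type*} [MeasurableSpace Ω] (P : Measure Ω) [IsProbabilityMeasure P]
    (X Y : Ω → ℝ)
    (hX : Measurable X) (hY : Measurable Y)
    (f : ℝ → ℝ) (x : ℝ)
    -- (i) the law of X has Lebesgue density f, continuous near x
    (hfcont : ∃ U ∈ 𝓝 x, ContinuousOn f U)
    -- (ii) ‖Y‖_∞ < ∞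
    (hYbd : ∃ C, ∀ ω, |Y ω| ≤ C)
    -- (iii) K is a version of the conditional distribution of Y given X,
    -- weakly continuous at x
    (K : Kernel ℝ ℝ) [IsMarkovKernel K]
    (hKcond : ∀ A B : Set ℝ, MeasurableSet A → MeasurableSet B →
      (P {ω | X ω ∈ A ∧ Y ω ∈ B}).toReal = ∫ s in A, (K s B).toReal * f s)
    (hKweak : ∀ g : ℝ → ℝ, Continuous g → (∃ C, ∀ y, |g y| ≤ C) →
      Tendsto (fun s => ∫ y, g y ∂(K s)) (𝓝 x) (𝓝 (∫ y, g y ∂(K x))))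
    -- the data of the conclusion
    (xt af cf : ℝ → ℝ) (a c : ℝ)
    (hxt : Tendsto xt (𝓝[>] (0 : ℝ)) (𝓝 x))
    (haf : Tendsto af (𝓝[>] (0 : ℝ)) (𝓝 a))
    (hcf : Tendsto cf (𝓝[>] (0 : ℝ)) (𝓝 c))
    (hcf0 : ∀ᶠ t in 𝓝[>] (0 : ℝ), 0 ≤ cf t) :
    Tendsto
      (fun t => (1 / t) *
        (P {ω | xt t < X ω + t * af t * Y ω ∧
            X ω + t * af t * Y ω ≤ xt t + t * cf t}).toReal)
      (𝓝[>] (0 : ℝ)) (𝓝 (c * f x)) := by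
  have hcond : IsCondDistribWithDensity P X Y K f := hKcond
  obtain ⟨C, hC⟩ := hYbd
  obtain ⟨U, hU, hfU⟩ := hfcont
  simp only [one_div, ← measureReal_def]
  refine tendsto_of_eventually_between (l' := 𝓝[>] 0)
    (lo := fun ε => (c - 5 * ε) * f x - ε) (hi := fun ε => (c + 5 * ε) * f x + ε)
    ((Continuous.tendsto' (by fun_prop) 0 _ (by simp)).mono_left nhdsWithin_le_nhds)
    ((Continuous.tendsto' (by fun_prop) 0 _ (by simp)).mono_left nhdsWithin_le_nhds)
    (eventually_nhdsWithin_of_forall fun ε hε => ?_)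
  exact hcond.eventually_inv_mul_measureReal_mem_Icc hX hY hC (hfU.continuousAt hU) hKweak hxt
    haf hcf (ge_of_tendsto hcf hcf0) hε

/-- Lemma 3.2 of van der Vaart & Wellner applied with `g = 1`:
`t⁻¹ ℙ(x_t < X + t a_t Y ≤ x_t + t c_t) → c f(x)`. -/
theorem stmt_2
    {Ω : Type*} [MeasurableSpace Ω] (P : Measure Ω) [IsProbabilityMeasure P]
    (X Y : Ω → ℝ)
    (hX : Measurable X) (hY : Measurable Y)
    (f : ℝ → ℝ) (x : ℝ)
    -- (i) the law of X has Lebesgue density f, continuous near x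
    (hdens : Measure.map X P = volume.withDensity fun s => ENNReal.ofReal (f s))
    (hfcont : ∃ U ∈ 𝓝 x, ContinuousOn f U)
    -- (ii) ‖Y‖_∞ < ∞
    (hYbd : ∃ C, ∀ ω, |Y ω| ≤ C)
    -- (iii) K is a version of the conditional distribution of Y given X,
    -- weakly continuous at x
    (K : Kernel ℝ ℝ) [IsMarkovKernel K]
    (hKcond : ∀ A B : Set ℝ, MeasurableSet A → MeasurableSet B →
      (P {ω | X ω ∈ A ∧ Y ω ∈ B}).toReal = ∫ s in A, (K s B).toReal * f s)
    (hKweak : ∀ g : ℝ → ℝ, Continuous g → (∃ C, ∀ y, |g y| ≤ C) →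
      Tendsto (fun s => ∫ y, g y ∂(K s)) (𝓝 x) (𝓝 (∫ y, g y ∂(K x))))
    -- the data of the conclusion
    (xt af cf : ℝ → ℝ) (a c : ℝ)
    (hxt : Tendsto xt (𝓝[>] (0 : ℝ)) (𝓝 x))
    (haf : Tendsto af (𝓝[>] (0 : ℝ)) (𝓝 a))
    (hcf : Tendsto cf (𝓝[>] (0 : ℝ)) (𝓝 c))
    (hcf0 : ∀ᶠ t in 𝓝[>] (0 : ℝ), 0 ≤ cf t) :
    Tendsto
      (fun t => (1 / t) *
        (P {ω | xt t < X ω + t * af t * Y ω ∧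
            X ω + t * af t * Y ω ≤ xt t + t * cf t}).toReal)
      (𝓝[>] (0 : ℝ)) (𝓝 (c * f x)) :=
  stmt_2_general P X Y hX hY f x hfcont hYbd K hKcond hKweak xt af cf a c hxt haf hcf hcf0
end

section
/- Let (Ω, ℱ, ℙ) be a probability space, let X = (X₁, X₂) be an ℝ²-valued random variable whose law has a Lebesgue density on ℝ² that is bounded on a neighbourhood of a point x = (x₁, x₂), and for each t > 0 let Y_t = (Y_{1,t}, Y_{2,t}) be an ℝ²-valued random variable on Ω with sup_{t>0} sup_ω ‖Y_t(ω)‖ < ∞. Then for all families (x_t) in ℝ², (a_t) in ℝ, (b_t) in ℝ² with x_t = (x_{1,t}, x_{2,t}) → x, a_t → a, b_t = (b_{1,t}, b_{2,t}) → b as t ↓ 0, one has (1/t) · ℙ( x_{1,t} < X₁ + t·a_t·Y_{1,t} ≤ x_{1,t} + t·b_{1,t} and x_{2,t} < X₂ + t·a_t·Y_{2,t} ≤ x_{2,t} + t·b_{2,t} ) → 0 as t ↓ 0. -/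
/-! Because the `Y_t` are uniformly bounded, the event forces `X` into the sup-norm ball of
radius `t (|a_t| C + ‖b_t‖) = O(t)` around `x_t`. Since `x_t → x`, that ball eventually lies in
the neighbourhood where the density is bounded, so the event has probability `O(t²) = o(t)`. -/

open MeasureTheory Filter Topology Metric

lemma abs_sub_le_of_lt_add_le {c y e d : ℝ} (h₁ : c < y + e) (h₂ : y + e ≤ c + d) :
    |y - c| ≤ |e| + |d| :=
  abs_le.2 ⟨by linarith [le_abs_self e, abs_nonneg d], by linarith [neg_abs_le e, le_abs_self d]⟩

lemma dist_le_norm_add_norm_of_lt_add_le {p c e d : ℝ × ℝ}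
    (h₁ : c.1 < p.1 + e.1 ∧ p.1 + e.1 ≤ c.1 + d.1) (h₂ : c.2 < p.2 + e.2 ∧ p.2 + e.2 ≤ c.2 + d.2) :
    dist p c ≤ ‖e‖ + ‖d‖ := by
  rw [Prod.dist_eq, Real.dist_eq, Real.dist_eq]
  exact max_le
    ((abs_sub_le_of_lt_add_le h₁.1 h₁.2).trans (add_le_add (norm_fst_le e) (norm_fst_le d)))
    ((abs_sub_le_of_lt_add_le h₂.1 h₂.2).trans (add_le_add (norm_snd_le e) (norm_snd_le d)))

lemma volume_closedBall_real_prod (z : ℝ × ℝ) (r : ℝ) :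
    volume (closedBall z r) = ENNReal.ofReal (2 * r) ^ 2 := by
  rw [← closedBall_prod_same, Measure.volume_eq_prod, Measure.prod_prod, Real.volume_closedBall,
    Real.volume_closedBall, sq]

lemma measure_preimage_le_of_map_eq_withDensity {Ω E : Type*} [MeasurableSpace Ω]
    [MeasurableSpace E] {P : Measure Ω} {μ : Measure E} {X : Ω → E} {g : E → ENNReal}
    (hX : AEMeasurable X P) (hmap : P.map X = μ.withDensity g) {S : Set E} (hS : MeasurableSet S)
    {C : ENNReal} (hg : ∀ s ∈ S, g s ≤ C) : P (X ⁻¹' S) ≤ C * μ S := by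
  rw [← Measure.map_apply_of_aemeasurable hX hS, hmap, withDensity_apply _ hS,
    ← setLIntegral_const]
  exact setLIntegral_mono' hS hg

lemma Filter.Tendsto.eventually_closedBall_subset {ι α : Type*} [PseudoMetricSpace α]
    {l : Filter ι} {c : ι → α} {r : ι → ℝ} {x : α} {U : Set α} (hc : Tendsto c l (𝓝 x)) (hU : U ∈ 𝓝 x)
    (hr : Tendsto r l (𝓝 0)) : ∀ᶠ i in l, closedBall (c i) (r i) ⊆ U := by
  obtain ⟨ε, hε, hεU⟩ := Metric.mem_nhds_iff.1 hU
  filter_upwards [hr.eventually_lt_const (half_pos hε),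
    (tendsto_iff_dist_tendsto_zero.1 hc).eventually_lt_const (half_pos hε)] with i hri hci
  exact (closedBall_subset_ball' (by linarith)).trans hεU

lemma eventually_measure_preimage_closedBall_le {ι Ω E : Type*} [MeasurableSpace Ω]
    [PseudoMetricSpace E] [MeasurableSpace E] [OpensMeasurableSpace E] {P : Measure Ω}
    {μ : Measure E} {X : Ω → E} {g : E → ENNReal} (hX : AEMeasurable X P)
    (hmap : P.map X = μ.withDensity g) {x : E} {U : Set E} (hU : U ∈ 𝓝 x) {C : ENNReal}
    (hg : ∀ s ∈ U, g s ≤ C) {l : Filter ι} {c : ι → E} {r : ι → ℝ} (hc : Tendsto c l (𝓝 x))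
    (hr : Tendsto r l (𝓝 0)) :
    ∀ᶠ i in l, P (X ⁻¹' closedBall (c i) (r i)) ≤ C * μ (closedBall (c i) (r i)) :=
  (hc.eventually_closedBall_subset hU hr).mono fun _ hi =>
    measure_preimage_le_of_map_eq_withDensity hX hmap measurableSet_closedBall
      fun s hs => hg s (hi hs)

theorem stmt_4_general
    {Ω : Type*} [MeasurableSpace Ω] (P : Measure Ω) [IsProbabilityMeasure P]
    (X : Ω → ℝ × ℝ) (Yt : ℝ → Ω → ℝ × ℝ)
    (hX : Measurable X)
    (f : ℝ × ℝ → ℝ) (x : ℝ × ℝ)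
    -- the law of X has a Lebesgue density f on ℝ², bounded near x
    (hdens : Measure.map X P = volume.withDensity fun s => ENNReal.ofReal (f s))
    (hfbd : ∃ U ∈ 𝓝 x, ∃ C, ∀ s ∈ U, f s ≤ C)
    -- the Y_t are uniformly bounded
    (hYtbd : ∃ C, ∀ t > (0 : ℝ), ∀ ω, ‖Yt t ω‖ ≤ C)
    -- the data of the conclusion
    (xt : ℝ → ℝ × ℝ) (af : ℝ → ℝ) (bf : ℝ → ℝ × ℝ) (a : ℝ) (b : ℝ × ℝ)
    (hxt : Tendsto xt (𝓝[>] (0 : ℝ)) (𝓝 x))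
    (haf : Tendsto af (𝓝[>] (0 : ℝ)) (𝓝 a))
    (hbf : Tendsto bf (𝓝[>] (0 : ℝ)) (𝓝 b)) :
    Tendsto
      (fun t => (1 / t) *
        (P {ω | ((xt t).1 < (X ω).1 + t * af t * (Yt t ω).1 ∧
              (X ω).1 + t * af t * (Yt t ω).1 ≤ (xt t).1 + t * (bf t).1) ∧
            (xt t).2 < (X ω).2 + t * af t * (Yt t ω).2 ∧
              (X ω).2 + t * af t * (Yt t ω).2 ≤ (xt t).2 + t * (bf t).2}).toReal)
      (𝓝[>] (0 : ℝ)) (𝓝 0) := by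
  obtain ⟨Cy, hCy⟩ := hYtbd
  obtain ⟨U, hU, C, hC⟩ := hfbd
  have hCy0 : 0 ≤ Cy :=
    have := nonempty_of_isProbabilityMeasure P
    (norm_nonneg _).trans (hCy 1 one_pos (Classical.arbitrary Ω))
  set C₀ := max C 0
  set k : ℝ → ℝ := fun t => |af t| * Cy + ‖bf t‖
  have hid : Tendsto (fun t : ℝ => t) (𝓝[>] 0) (𝓝 0) := tendsto_id.mono_left nhdsWithin_le_nhds
  have hk : Tendsto k (𝓝[>] 0) (𝓝 (|a| * Cy + ‖b‖)) := (haf.abs.mul_const Cy).add hbf.norm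
  have hr : Tendsto (fun t => t * k t) (𝓝[>] 0) (𝓝 0) := by simpa using hid.mul hk
  have hball := eventually_measure_preimage_closedBall_le hX.aemeasurable hdens hU
    (fun s hs => ENNReal.ofReal_le_ofReal ((hC s hs).trans (le_max_left C 0))) hxt hr
  have hlim : Tendsto (fun t => 4 * C₀ * t * k t ^ 2) (𝓝[>] 0) (𝓝 0) := by
    simpa using ((hid.const_mul (4 * C₀)).mul (hk.pow 2))
  refine squeeze_zero' (eventually_mem_nhdsWithin.mono fun t (ht : 0 < t) => by positivity)
    ?_ hlim
  filter_upwards [hball, eventually_mem_nhdsWithin] with t hPt (ht : 0 < t)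
  calc (1 / t) * (P _).toReal
      ≤ (1 / t) * (C₀ * (2 * (t * k t)) ^ 2) := by
        gcongr
        refine ENNReal.toReal_le_of_le_ofReal (by positivity)
          (((measure_mono fun ω hω => ?_).trans hPt).trans_eq ?_)
        · refine mem_closedBall.2 ((dist_le_norm_add_norm_of_lt_add_le
            (e := (t * af t) • Yt t ω) (d := t • bf t) hω.1 hω.2).trans ?_)
          rw [norm_smul, norm_smul, Real.norm_eq_abs, Real.norm_eq_abs, abs_mul, abs_of_pos ht]
          calc t * |af t| * ‖Yt t ω‖ + t * ‖bf t‖ ≤ t * |af t| * Cy + t * ‖bf t‖ := by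
                gcongr; exact hCy t ht ω
            _ = t * k t := by ring
        · rw [volume_closedBall_real_prod, ← ENNReal.ofReal_pow (by positivity),
            ← ENNReal.ofReal_mul (le_max_right C 0)]
    _ = 4 * C₀ * t * k t ^ 2 := by field_simp; ring

/-- The "event II does not contribute" step in the proof of Lemma 3.3 of
van der Vaart & Wellner: the probability that both coordinates of
`X + t a_t Y_t` fall in intervals of length `O(t)` is `o(t)`. -/
theorem stmt_4
    {Ω : Type*} [MeasurableSpace Ω] (P : Measure Ω) [IsProbabilityMeasure P]
    (X : Ω → ℝ × ℝ) (Yt : ℝ → Ω → ℝ × ℝ)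
    (hX : Measurable X) (hYt : ∀ t, Measurable (Yt t))
    (f : ℝ × ℝ → ℝ) (x : ℝ × ℝ)
    -- the law of X has a Lebesgue density f on ℝ², bounded near x
    (hdens : Measure.map X P = volume.withDensity fun s => ENNReal.ofReal (f s))
    (hfbd : ∃ U ∈ 𝓝 x, ∃ C, ∀ s ∈ U, f s ≤ C)
    -- the Y_t are uniformly bounded
    (hYtbd : ∃ C, ∀ t > (0 : ℝ), ∀ ω, ‖Yt t ω‖ ≤ C)
    -- the data of the conclusion
    (xt : ℝ → ℝ × ℝ) (af : ℝ → ℝ) (bf : ℝ → ℝ × ℝ) (a : ℝ) (b : ℝ × ℝ)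
    (hxt : Tendsto xt (𝓝[>] (0 : ℝ)) (𝓝 x))
    (haf : Tendsto af (𝓝[>] (0 : ℝ)) (𝓝 a))
    (hbf : Tendsto bf (𝓝[>] (0 : ℝ)) (𝓝 b)) :
    Tendsto
      (fun t => (1 / t) *
        (P {ω | ((xt t).1 < (X ω).1 + t * af t * (Yt t ω).1 ∧
              (X ω).1 + t * af t * (Yt t ω).1 ≤ (xt t).1 + t * (bf t).1) ∧
            (xt t).2 < (X ω).2 + t * af t * (Yt t ω).2 ∧
              (X ω).2 + t * af t * (Yt t ω).2 ≤ (xt t).2 + t * (bf t).2}).toReal)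
      (𝓝[>] (0 : ℝ)) (𝓝 0) :=
  stmt_4_general P X Yt hX f x hdens hfbd hYtbd xt af bf a b hxt haf hbf
end

section
/- Let (Ω, ℱ, ℙ) be a probability space, let X and Y be real-valued random variables on Ω, and for each t > 0 let Y_t be a real-valued random variable on Ω. Assume the law of X has a Lebesgue density that is bounded on a neighbourhood of a point x ∈ ℝ, that sup_ω |Y_t(ω) − Y(ω)| → 0 as t ↓ 0, and that sup_ω |Y(ω)| < ∞. Then for every continuous g : ℝ → ℝ and all families (x_t), (a_t), (b_t) of real numbers with x_t → x, a_t → a, b_t → b and b_t ≥ 0 as t ↓ 0, one has (1/t) · E[ |g(Y_t) − g(Y)| · 1{x_t < X + t·a_t·Y_t ≤ x_t + t·b_t} ] → 0 as t ↓ 0. -/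
open MeasureTheory Filter Topology Set

/-!
On the event, the integrand is at most `sup_ω |g (Y_t ω) - g (Y ω)|`, which tends to `0` because
`g` is uniformly continuous on a compact neighbourhood of the bounded range of `Y`. The event
forces `X` into a window around `x_t` of length `O(t)`; as the density of `X` is bounded near `x`,
the event has probability `O(t)`, which absorbs the factor `1 / t`.
-/

theorem TendstoUniformly.comp_continuous_of_isBounded {α β γ ι : Type*}
    [PseudoMetricSpace β] [ProperSpace β] [UniformSpace γ] {p : Filter ι}
    {F : ι → α → β} {f : α → β} {g : β → γ} (hg : Continuous g)
    (hf : Bornology.IsBounded (range f)) (h : TendstoUniformly F f p) :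
    TendstoUniformly (fun i x => g (F i x)) (fun x => g (f x)) p := by
  have hK : IsCompact (Metric.cthickening 1 (range f)) :=
    Metric.isCompact_of_isClosed_isBounded Metric.isClosed_cthickening hf.cthickening
  refine (hK.uniformContinuousOn_of_continuous hg.continuousOn).comp_tendstoUniformly_eventually
    ?_ (fun x => Metric.self_subset_cthickening _ (mem_range_self x)) h
  filter_upwards [Metric.tendstoUniformly_iff.1 h 1 one_pos] with i hi x
  exact Metric.mem_cthickening_of_dist_le _ (f x) _ _ (mem_range_self x) (by
    rw [dist_comm]; exact (hi x).le)

theorem measure_preimage_le_of_map_eq_withDensity_s11 {Ω : Type*} [MeasurableSpace Ω]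
    {μ : Measure Ω} {X : Ω → ℝ} {f : ℝ → ℝ} (hX : Measurable X)
    (hdens : μ.map X = volume.withDensity fun s => ENNReal.ofReal (f s))
    {S : Set ℝ} (hS : MeasurableSet S) {D : ℝ} (hfD : ∀ s ∈ S, f s ≤ D) :
    μ (X ⁻¹' S) ≤ ENNReal.ofReal D * volume S := by
  calc μ (X ⁻¹' S) = ∫⁻ s in S, ENNReal.ofReal (f s) := by
        rw [← Measure.map_apply hX hS, hdens, withDensity_apply _ hS]
    _ ≤ ∫⁻ _ in S, ENNReal.ofReal D :=
        setLIntegral_mono measurable_const fun s hs => ENNReal.ofReal_le_ofReal (hfD s hs)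
    _ = ENNReal.ofReal D * volume S := setLIntegral_const _ _

theorem mem_Ioc_of_add_mem_Ioc {X p u v A B : ℝ} (h : X + p ∈ Ioc u (u + v))
    (hp : |p| ≤ A) (hv : v ≤ B) : X ∈ Ioc (u - A) (u + A + B) := by
  obtain ⟨h₁, h₂⟩ := h
  rw [abs_le] at hp
  constructor <;> linarith

theorem eventually_measure_le_mul_of_density_bounded_near {Ω : Type*} [MeasurableSpace Ω]
    {μ : Measure Ω} {X : Ω → ℝ} {f : ℝ → ℝ} {x : ℝ} (hX : Measurable X)
    (hdens : μ.map X = volume.withDensity fun s => ENNReal.ofReal (f s))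
    (hfbd : ∃ U ∈ 𝓝 x, ∃ C, ∀ s ∈ U, f s ≤ C)
    {xt q : ℝ → ℝ} {p : ℝ → Ω → ℝ} {A : ℝ} (hxt : Tendsto xt (𝓝[>] 0) (𝓝 x))
    (hp : ∀ᶠ t in 𝓝[>] 0, ∀ ω, |p t ω| ≤ A) (hq : IsBoundedUnder (· ≤ ·) (𝓝[>] 0) q) :
    ∃ K, ∀ᶠ t in 𝓝[>] 0,
      μ {ω | xt t < X ω + t * p t ω ∧ X ω + t * p t ω ≤ xt t + t * q t} ≤
        ENNReal.ofReal (K * t) := by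
  obtain ⟨U, hU, C, hfC⟩ := hfbd
  obtain ⟨D, hD, hfD⟩ : ∃ D, 0 ≤ D ∧ ∀ s ∈ U, f s ≤ D :=
    ⟨max C 0, le_max_right _ _, fun s hs => (hfC s hs).trans (le_max_left _ _)⟩
  obtain ⟨B, hqB⟩ := hq
  have ht0 : Tendsto (fun t : ℝ => t) (𝓝[>] 0) (𝓝 0) :=
    tendsto_nhdsWithin_of_tendsto_nhds tendsto_id
  have hsub : ∀ᶠ t in 𝓝[>] (0 : ℝ), Ioc (xt t - t * A) (xt t + t * A + t * B) ⊆ U := by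
    have hlo : Tendsto (fun t => xt t - t * A) (𝓝[>] 0) (𝓝 x) := by
      simpa using hxt.sub (ht0.mul_const A)
    have hhi : Tendsto (fun t => xt t + t * A + t * B) (𝓝[>] 0) (𝓝 x) := by
      simpa using (hxt.add (ht0.mul_const A)).add (ht0.mul_const B)
    exact (hlo.Ioc hhi).eventually (eventually_smallSets_subset.2 hU)
  refine ⟨D * (2 * A + B), ?_⟩
  filter_upwards [hp, hqB, hsub, self_mem_nhdsWithin] with t hpt hqt hUt (ht : 0 < t)
  calc _ ≤ μ (X ⁻¹' Ioc (xt t - t * A) (xt t + t * A + t * B)) := by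
        refine measure_mono fun ω hω => mem_Ioc_of_add_mem_Ioc (v := t * q t) hω ?_ ?_
        · rw [abs_mul, abs_of_pos ht]
          exact mul_le_mul_of_nonneg_left (hpt ω) ht.le
        · exact mul_le_mul_of_nonneg_left hqt ht.le
    _ ≤ ENNReal.ofReal D * volume (Ioc (xt t - t * A) (xt t + t * A + t * B)) :=
        measure_preimage_le_of_map_eq_withDensity_s11 hX hdens measurableSet_Ioc
          fun s hs => hfD s (hUt hs)
    _ = ENNReal.ofReal (D * (2 * A + B) * t) := by
        rw [Real.volume_Ioc, ← ENNReal.ofReal_mul hD]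
        congr 1
        ring

theorem tendsto_inv_mul_setIntegral_abs_sub_of_tendstoUniformly {Ω : Type*} [MeasurableSpace Ω]
    {μ : Measure Ω} {F : ℝ → Ω → ℝ} {G : Ω → ℝ} {E : ℝ → Set Ω}
    (hFG : TendstoUniformly F G (𝓝[>] 0))
    (hE : ∃ K, ∀ᶠ t in 𝓝[>] 0, μ (E t) ≤ ENNReal.ofReal (K * t)) :
    Tendsto (fun t => (1 / t) * ∫ ω in E t, |F t ω - G ω| ∂μ) (𝓝[>] 0) (𝓝 0) := by
  obtain ⟨K, hK⟩ := hE
  set K' := max K 0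
  rw [NormedAddGroup.tendsto_nhds_zero]
  intro ε hε
  have hε' : 0 < ε / (K' + 1) := by positivity
  filter_upwards [Metric.tendstoUniformly_iff.1 hFG _ hε', hK, self_mem_nhdsWithin]
    with t hFt hEt (ht : 0 < t)
  have hEt' : μ.real (E t) ≤ K' * t := ENNReal.toReal_le_of_le_ofReal (by positivity)
    (hEt.trans (ENNReal.ofReal_le_ofReal (by gcongr; exact le_max_left _ _)))
  have hint : ‖∫ ω in E t, |F t ω - G ω| ∂μ‖ ≤ ε / (K' + 1) * μ.real (E t) :=
    norm_setIntegral_le_of_norm_le_const (hEt.trans_lt ENNReal.ofReal_lt_top) fun ω _ => by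
      rw [Real.norm_eq_abs, abs_abs, abs_sub_comm, ← Real.dist_eq]
      exact (hFt ω).le
  calc ‖(1 / t) * ∫ ω in E t, |F t ω - G ω| ∂μ‖
      ≤ (1 / t) * (ε / (K' + 1) * (K' * t)) := by
        rw [norm_mul, Real.norm_of_nonneg (by positivity)]
        gcongr
        exact hint.trans (by gcongr)
    _ = ε * (K' / (K' + 1)) := by field_simp
    _ < ε := mul_lt_of_lt_one_right hε ((div_lt_one (by positivity)).2 (lt_add_one K'))

theorem stmt_11_general
    {Ω : Type*} [MeasurableSpace Ω] (P : Measure Ω)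
    (X Y : Ω → ℝ) (Yt : ℝ → Ω → ℝ)
    (hX : Measurable X)
    (f : ℝ → ℝ) (x : ℝ)
    -- the law of X has a Lebesgue density f, bounded near x
    (hdens : Measure.map X P = volume.withDensity fun s => ENNReal.ofReal (f s))
    (hfbd : ∃ U ∈ 𝓝 x, ∃ C, ∀ s ∈ U, f s ≤ C)
    -- ‖Y_t − Y‖_∞ → 0 as t ↓ 0 and ‖Y‖_∞ < ∞
    (hYtY : ∀ ε > 0, ∀ᶠ t in 𝓝[>] (0 : ℝ), ∀ ω, |Yt t ω - Y ω| ≤ ε)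
    (hYbd : ∃ C, ∀ ω, |Y ω| ≤ C)
    -- the data of the conclusion
    (g : ℝ → ℝ) (hg : Continuous g)
    (xt af bf : ℝ → ℝ) (a b : ℝ)
    (hxt : Tendsto xt (𝓝[>] (0 : ℝ)) (𝓝 x))
    (haf : Tendsto af (𝓝[>] (0 : ℝ)) (𝓝 a))
    (hbf : Tendsto bf (𝓝[>] (0 : ℝ)) (𝓝 b)) :
    Tendsto
      (fun t => (1 / t) *
        ∫ ω in {ω | xt t < X ω + t * af t * Yt t ω ∧
            X ω + t * af t * Yt t ω ≤ xt t + t * bf t},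
          |g (Yt t ω) - g (Y ω)| ∂P)
      (𝓝[>] (0 : ℝ)) (𝓝 0) := by
  obtain ⟨C, hC⟩ := hYbd
  have hunif : TendstoUniformly Yt Y (𝓝[>] 0) :=
    Metric.tendstoUniformly_iff.2 fun ε hε => (hYtY (ε / 2) (half_pos hε)).mono fun t ht ω => by
      rw [Real.dist_eq, abs_sub_comm]
      linarith [ht ω]
  have hYbdd : Bornology.IsBounded (range Y) :=
    isBounded_iff_forall_norm_le.2 ⟨C, by rintro _ ⟨ω, rfl⟩; exact hC ω⟩
  have hperturb : ∀ᶠ t in 𝓝[>] 0, ∀ ω, |af t * Yt t ω| ≤ (|a| + 1) * (C + 1) := by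
    filter_upwards [haf.abs.eventually_le_const (lt_add_one |a|), hYtY 1 one_pos]
      with t hat hYt ω
    rw [abs_mul]
    refine mul_le_mul hat ?_ (abs_nonneg _) (by positivity)
    linarith [abs_sub_abs_le_abs_sub (Yt t ω) (Y ω), hC ω, hYt ω]
  simp_rw [mul_assoc]
  exact tendsto_inv_mul_setIntegral_abs_sub_of_tendstoUniformly
    (hunif.comp_continuous_of_isBounded hg hYbdd)
    (eventually_measure_le_mul_of_density_bounded_near hX hdens hfbd hxt hperturb
      hbf.isBoundedUnder_le)

/-- The step in the proof of Lemma 3.2 of van der Vaart & Wellner in which `Y_t`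
is replaced by `Y` in the integrand:
`t⁻¹ E[|g(Y_t) − g(Y)| 1{x_t < X + t a_t Y_t ≤ x_t + t b_t}] → 0`. -/
theorem stmt_11
    {Ω : Type*} [MeasurableSpace Ω] (P : Measure Ω) [IsProbabilityMeasure P]
    (X Y : Ω → ℝ) (Yt : ℝ → Ω → ℝ)
    (hX : Measurable X) (hY : Measurable Y) (hYt : ∀ t, Measurable (Yt t))
    (f : ℝ → ℝ) (x : ℝ)
    -- the law of X has a Lebesgue density f, bounded near x
    (hdens : Measure.map X P = volume.withDensity fun s => ENNReal.ofReal (f s))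
    (hfbd : ∃ U ∈ 𝓝 x, ∃ C, ∀ s ∈ U, f s ≤ C)
    -- ‖Y_t − Y‖_∞ → 0 as t ↓ 0 and ‖Y‖_∞ < ∞
    (hYtY : ∀ ε > 0, ∀ᶠ t in 𝓝[>] (0 : ℝ), ∀ ω, |Yt t ω - Y ω| ≤ ε)
    (hYbd : ∃ C, ∀ ω, |Y ω| ≤ C)
    -- the data of the conclusion
    (g : ℝ → ℝ) (hg : Continuous g)
    (xt af bf : ℝ → ℝ) (a b : ℝ)
    (hxt : Tendsto xt (𝓝[>] (0 : ℝ)) (𝓝 x))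
    (haf : Tendsto af (𝓝[>] (0 : ℝ)) (𝓝 a))
    (hbf : Tendsto bf (𝓝[>] (0 : ℝ)) (𝓝 b))
    (hbf0 : ∀ᶠ t in 𝓝[>] (0 : ℝ), 0 ≤ bf t) :
    Tendsto
      (fun t => (1 / t) *
        ∫ ω in {ω | xt t < X ω + t * af t * Yt t ω ∧
            X ω + t * af t * Yt t ω ≤ xt t + t * bf t},
          |g (Yt t ω) - g (Y ω)| ∂P)
      (𝓝[>] (0 : ℝ)) (𝓝 0) :=
  stmt_11_general P X Y Yt hX f x hdens hfbd hYtY hYbd g hg xt af bf a b hxt haf hbf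
end
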